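/- On ℝ⁶ with spherical-type coordinates (r, θ, φ) (r > 0, 0 < θ < π, cos φ ≠ 0, sin φ ≠ 0) and conjugate momenta, the Hamiltonian H = (1/2)(p_r² + p_θ²/r² + p_φ²/(r² sin²θ)) − k/r + k₁/(r² sin²θ cos²φ) + k₂/(r² sin²θ sin²φ) Poisson-commutes with I₁ = (1/2)(p_θ² + p_φ²/sin²θ) + k₁/(sin²θ cos²φ) + k₂/(sin²θ sin²φ). -/

import Mathlib

/-!
Write `T = p_r²/2 - k/r`. Then `H = T + I₁ / r²`, where `T` and `1/r²` depend only on the pair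
`(r, p_r)` while `I₁` depends only on the angular pairs. Functions of disjoint sets of conjugate
pairs Poisson-commute, so the Leibniz rule gives
`{H, I₁} = {T, I₁} + (1/r²) {I₁, I₁} + I₁ {1/r², I₁} = 0`.
-/

/-- Canonical Poisson bracket on ℝⁿ × ℝⁿ (positions, momenta). -/
noncomputable def pb {n : ℕ} (f g : (Fin n → ℝ) × (Fin n → ℝ) → ℝ) :
    (Fin n → ℝ) × (Fin n → ℝ) → ℝ :=
  fun z => ∑ i, (fderiv ℝ f z (Pi.single i 1, 0) * fderiv ℝ g z (0, Pi.single i 1)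
    - fderiv ℝ f z (0, Pi.single i 1) * fderiv ℝ g z (Pi.single i 1, 0))

theorem fderiv_apply_eq_zero_of_forall_add_smul_eq {𝕜 E F : Type*} [NontriviallyNormedField 𝕜]
    [NormedAddCommGroup E] [NormedSpace 𝕜 E] [NormedAddCommGroup F] [NormedSpace 𝕜 F]
    {f : E → F} {x v : E} (h : ∀ t : 𝕜, f (x + t • v) = f x) : fderiv 𝕜 f x v = 0 := by
  by_cases hf : DifferentiableAt 𝕜 f x
  · have hline : HasDerivAt (fun t : 𝕜 => x + t • v) v 0 := by
      simpa using ((hasDerivAt_id (0 : 𝕜)).smul_const v).const_add x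
    have hcomp : HasDerivAt (fun t : 𝕜 => f (x + t • v)) (fderiv 𝕜 f x v) 0 :=
      hf.hasFDerivAt.comp_hasDerivAt_of_eq 0 hline (by simp)
    simp only [h] at hcomp
    exact hcomp.unique (hasDerivAt_const 0 (f x))
  · simp [fderiv_zero_of_not_differentiableAt hf]

def DependsOnPairs {n : ℕ} (f : (Fin n → ℝ) × (Fin n → ℝ) → ℝ) (s : Set (Fin n)) : Prop :=
  ∀ ⦃w w'⦄, (∀ i ∈ s, w.1 i = w'.1 i ∧ w.2 i = w'.2 i) → f w = f w'

namespace DependsOnPairs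

variable {n : ℕ} {f g : (Fin n → ℝ) × (Fin n → ℝ) → ℝ} {s : Set (Fin n)}

theorem fderiv_apply_eq_zero (hf : DependsOnPairs f s) (z : (Fin n → ℝ) × (Fin n → ℝ))
    {v : (Fin n → ℝ) × (Fin n → ℝ)} (hv : ∀ i ∈ s, v.1 i = 0 ∧ v.2 i = 0) :
    fderiv ℝ f z v = 0 :=
  fderiv_apply_eq_zero_of_forall_add_smul_eq fun t => hf fun i hi => by simp [hv i hi]

theorem fderiv_position_eq_zero (hf : DependsOnPairs f s) (z : (Fin n → ℝ) × (Fin n → ℝ))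
    {i : Fin n} (hi : i ∉ s) : fderiv ℝ f z (Pi.single i 1, 0) = 0 :=
  hf.fderiv_apply_eq_zero z fun j hj => by simp [ne_of_mem_of_not_mem hj hi]

theorem fderiv_momentum_eq_zero (hf : DependsOnPairs f s) (z : (Fin n → ℝ) × (Fin n → ℝ))
    {i : Fin n} (hi : i ∉ s) : fderiv ℝ f z (0, Pi.single i 1) = 0 :=
  hf.fderiv_apply_eq_zero z fun j hj => by simp [ne_of_mem_of_not_mem hj hi]

theorem pb_eq_zero (hf : DependsOnPairs f s) (hg : DependsOnPairs g sᶜ) : pb f g = 0 := by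
  funext z
  refine Finset.sum_eq_zero fun i _ => ?_
  by_cases hi : i ∈ s
  · have hi' : i ∉ sᶜ := fun h => h hi
    simp [hg.fderiv_position_eq_zero z hi', hg.fderiv_momentum_eq_zero z hi']
  · simp [hf.fderiv_position_eq_zero z hi, hf.fderiv_momentum_eq_zero z hi]

end DependsOnPairs

section PoissonBracket

variable {n : ℕ} {f f' g : (Fin n → ℝ) × (Fin n → ℝ) → ℝ} {z : (Fin n → ℝ) × (Fin n → ℝ)}

theorem pb_self (f : (Fin n → ℝ) × (Fin n → ℝ) → ℝ) : pb f f = 0 := by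
  funext z
  simp [pb, mul_comm]

theorem pb_add_left (hf : DifferentiableAt ℝ f z) (hf' : DifferentiableAt ℝ f' z) :
    pb (f + f') g z = pb f g z + pb f' g z := by
  simp only [pb]
  rw [fderiv_add hf hf', ← Finset.sum_add_distrib]
  refine Finset.sum_congr rfl fun i _ => ?_
  simp only [add_apply]
  ring

theorem pb_mul_left (hf : DifferentiableAt ℝ f z) (hf' : DifferentiableAt ℝ f' z) :
    pb (f * f') g z = f z * pb f' g z + f' z * pb f g z := by
  simp only [pb]
  rw [fderiv_mul hf hf', Finset.mul_sum, Finset.mul_sum, ← Finset.sum_add_distrib]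
  refine Finset.sum_congr rfl fun i _ => ?_
  simp only [add_apply, smul_apply, smul_eq_mul]
  ring

end PoissonBracket

noncomputable def radialEnergy (k : ℝ) (w : (Fin 3 → ℝ) × (Fin 3 → ℝ)) : ℝ :=
  (1 / 2) * (w.2 0) ^ 2 - k / (w.1 0)

noncomputable def angularIntegral (k₁ k₂ : ℝ) (w : (Fin 3 → ℝ) × (Fin 3 → ℝ)) : ℝ :=
  (1 / 2) * ((w.2 1) ^ 2 + (w.2 2) ^ 2 / Real.sin (w.1 1) ^ 2)
    + k₁ / (Real.sin (w.1 1) ^ 2 * Real.cos (w.1 2) ^ 2)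
    + k₂ / (Real.sin (w.1 1) ^ 2 * Real.sin (w.1 2) ^ 2)

noncomputable def inverseRadiusSq (w : (Fin 3 → ℝ) × (Fin 3 → ℝ)) : ℝ :=
  ((w.1 0) ^ 2)⁻¹

theorem dependsOnPairs_radialEnergy (k : ℝ) : DependsOnPairs (radialEnergy k) {0} := by
  intro w w' h
  obtain ⟨hq, hp⟩ := h 0 rfl
  simp only [radialEnergy, hq, hp]

theorem dependsOnPairs_inverseRadiusSq : DependsOnPairs inverseRadiusSq {0} := by
  intro w w' h
  simp only [inverseRadiusSq, (h 0 rfl).1]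

theorem dependsOnPairs_angularIntegral (k₁ k₂ : ℝ) :
    DependsOnPairs (angularIntegral k₁ k₂) {0}ᶜ := by
  intro w w' h
  obtain ⟨hq₁, hp₁⟩ := h 1 (by simp)
  obtain ⟨hq₂, hp₂⟩ := h 2 (by simp)
  simp only [angularIntegral, hq₁, hp₁, hq₂, hp₂]

theorem differentiableAt_radialEnergy (k : ℝ) {z : (Fin 3 → ℝ) × (Fin 3 → ℝ)}
    (hr : z.1 0 ≠ 0) : DifferentiableAt ℝ (radialEnergy k) z := by
  unfold radialEnergy
  fun_prop (disch := assumption)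

theorem differentiableAt_inverseRadiusSq {z : (Fin 3 → ℝ) × (Fin 3 → ℝ)}
    (hr : z.1 0 ≠ 0) : DifferentiableAt ℝ inverseRadiusSq z := by
  unfold inverseRadiusSq
  fun_prop (disch := positivity)

theorem differentiableAt_angularIntegral (k₁ k₂ : ℝ) {z : (Fin 3 → ℝ) × (Fin 3 → ℝ)}
    (hθ : Real.sin (z.1 1) ≠ 0) (hcφ : Real.cos (z.1 2) ≠ 0) (hsφ : Real.sin (z.1 2) ≠ 0) :
    DifferentiableAt ℝ (angularIntegral k₁ k₂) z := by
  unfold angularIntegral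
  fun_prop (disch := positivity)

/-- Spherical-coordinate Hamiltonian
H = (1/2)(p_r² + p_θ²/r² + p_φ²/(r²sin²θ)) − k/r + k₁/(r²sin²θcos²φ) + k₂/(r²sin²θsin²φ)
Poisson-commutes with I₁ = (1/2)(p_θ² + p_φ²/sin²θ) + k₁/(sin²θcos²φ) + k₂/(sin²θsin²φ).
Coordinates: r = z.1 0, θ = z.1 1, φ = z.1 2 with momenta z.2 0, z.2 1, z.2 2. -/
theorem stmt11 (k k₁ k₂ : ℝ) :
    ∀ z : (Fin 3 → ℝ) × (Fin 3 → ℝ), 0 < z.1 0 → Real.sin (z.1 1) ≠ 0 →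
      Real.cos (z.1 2) ≠ 0 → Real.sin (z.1 2) ≠ 0 →
    pb (fun w => (1 / 2) * ((w.2 0) ^ 2 + (w.2 1) ^ 2 / (w.1 0) ^ 2
          + (w.2 2) ^ 2 / ((w.1 0) ^ 2 * Real.sin (w.1 1) ^ 2))
          - k / (w.1 0)
          + k₁ / ((w.1 0) ^ 2 * Real.sin (w.1 1) ^ 2 * Real.cos (w.1 2) ^ 2)
          + k₂ / ((w.1 0) ^ 2 * Real.sin (w.1 1) ^ 2 * Real.sin (w.1 2) ^ 2))
       (fun w => (1 / 2) * ((w.2 1) ^ 2 + (w.2 2) ^ 2 / Real.sin (w.1 1) ^ 2)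
          + k₁ / (Real.sin (w.1 1) ^ 2 * Real.cos (w.1 2) ^ 2)
          + k₂ / (Real.sin (w.1 1) ^ 2 * Real.sin (w.1 2) ^ 2)) z = 0 := by
  intro z hr hθ hcφ hsφ
  -- an identity of functions on all of phase space: `(a * b)⁻¹ = a⁻¹ * b⁻¹` holds also at `0`
  have hH : radialEnergy k + inverseRadiusSq * angularIntegral k₁ k₂ = fun w =>
      (1 / 2) * ((w.2 0) ^ 2 + (w.2 1) ^ 2 / (w.1 0) ^ 2
          + (w.2 2) ^ 2 / ((w.1 0) ^ 2 * Real.sin (w.1 1) ^ 2))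
          - k / (w.1 0)
          + k₁ / ((w.1 0) ^ 2 * Real.sin (w.1 1) ^ 2 * Real.cos (w.1 2) ^ 2)
          + k₂ / ((w.1 0) ^ 2 * Real.sin (w.1 1) ^ 2 * Real.sin (w.1 2) ^ 2) := by
    funext w
    simp only [Pi.add_apply, Pi.mul_apply, radialEnergy, inverseRadiusSq, angularIntegral]
    ring
  change pb _ (angularIntegral k₁ k₂) z = 0
  have hI := differentiableAt_angularIntegral k₁ k₂ hθ hcφ hsφ
  have hg := differentiableAt_inverseRadiusSq hr.ne'
  rw [← hH, pb_add_left (differentiableAt_radialEnergy k hr.ne') (hg.mul hI), pb_mul_left hg hI,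
    pb_self, (dependsOnPairs_radialEnergy k).pb_eq_zero (dependsOnPairs_angularIntegral k₁ k₂),
    dependsOnPairs_inverseRadiusSq.pb_eq_zero (dependsOnPairs_angularIntegral k₁ k₂)]
  simp
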